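/- Let G = (V, E, w_G) and G' = (V, E, w_{G'}) be weighted digraphs with the same underlying digraph but different weight functions, and set η = max_{(x,x') ∈ E} |w_G(x, x') − w_{G'}(x, x')| (0 if E is empty). Then for every p ∈ ℕ and every field K, the persistence modules δ ↦ H_p(G^δ) and δ ↦ H_p(G'^δ) (indexed by δ ∈ [0, ∞), with structure maps induced by inclusions of edge sublevel digraphs) are η-interleaved, via the maps induced by the identity on vertices. -/
import Mathlib


/-!
STATEMENT 16: Let G = (V, E, w_G) and G' = (V, E, w_{G'}) be weighted digraphs with the
same underlying digraph and η = max_{(x,x') ∈ E} |w_G(x,x') − w_{G'}(x,x')| (0 if E = ∅).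
Then for every p ∈ ℕ and every field K the persistence modules δ ↦ H_p(G^δ) and
δ ↦ H_p(G'^δ) (δ ∈ [0,∞), structure maps induced by inclusions of edge sublevel
digraphs) are η-interleaved, via the maps induced by the identity on vertices.

The interleaving is expressed at the level of cycles and boundaries, the structure maps
being the submodule inclusions (the composite conditions of the interleaving then reduce
to these inclusion statements, since the identity-induced chain map is the identity on
regular allowed chains).
-/

open scoped Classical

namespace PH

/-- An elementary path (a list of vertices) is regular if no two consecutive
vertices coincide. -/
def Reg {V : Type} (l : List V) : Prop := l.Chain' (· ≠ ·)

/-- The regular boundary operator ∂ on the span of regular paths (all degrees at once,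
with the convention that ∂ vanishes on 0-paths): on a basis path `p` of length ≥ 2 it is
the alternating sum of the vertex deletions, with non-regular terms replaced by 0. -/
noncomputable def dReg (K : Type) [Field K] (V : Type) :
    (List V →₀ K) →ₗ[K] (List V →₀ K) :=
  Finsupp.lsum K fun p => LinearMap.toSpanSingleton K (List V →₀ K)
    (if 2 ≤ p.length then
      ∑ q : Fin p.length, ((-1 : K) ^ (q : ℕ)) •
        (if Reg (p.eraseIdx (q : ℕ)) then Finsupp.single (p.eraseIdx (q : ℕ)) (1 : K) else 0)
    else 0)

/-- The map induced on regular chains by a vertex map f: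
`e_{i₀…iₙ} ↦ e_{f(i₀)…f(iₙ)}` if the image path is regular, and 0 otherwise. -/
noncomputable def find (K : Type) [Field K] {V W : Type} (f : V → W) :
    (List V →₀ K) →ₗ[K] (List W →₀ K) :=
  Finsupp.lsum K fun p => LinearMap.toSpanSingleton K (List W →₀ K)
    (if Reg (p.map f) then Finsupp.single (p.map f) (1 : K) else 0)

/-- `A_n(P)`: the span of the regular allowed n-paths (lists of n+1 vertices in P). -/
def Asub (K : Type) [Field K] {V : Type} (P : Set (List V)) (n : ℕ) :
    Submodule K (List V →₀ K) :=
  Finsupp.supported K K {l | l ∈ P ∧ l.length = n + 1 ∧ Reg l}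

/-- `Ω_n(P)`: the ∂-invariant allowed regular n-chains. -/
noncomputable def OmegaSub (K : Type) [Field K] {V : Type} (P : Set (List V)) (n : ℕ) :
    Submodule K (List V →₀ K) :=
  Asub K P n ⊓ Submodule.comap (dReg K V) (Asub K P (n - 1))

/-- The n-cycles of Ω_*(P). -/
noncomputable def Zsub (K : Type) [Field K] {V : Type} (P : Set (List V)) (n : ℕ) :
    Submodule K (List V →₀ K) :=
  OmegaSub K P n ⊓ LinearMap.ker (dReg K V)

/-- The n-boundaries ∂Ω_{n+1}(P). -/
noncomputable def Bsub (K : Type) [Field K] {V : Type} (P : Set (List V)) (n : ℕ) :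
    Submodule K (List V →₀ K) :=
  Submodule.map (dReg K V) (OmegaSub K P (n + 1))

/-- Path homology `H_n(P)`, realized as the image of the n-cycles in the quotient of the
ambient space by the n-boundaries (so `H_n(P) ≅ Z_n/(Z_n ∩ B_n) = Z_n/B_n`). -/
noncomputable def Hsm (K : Type) [Field K] {V : Type} (P : Set (List V)) (n : ℕ) :
    Submodule K ((List V →₀ K) ⧸ Bsub K P n) :=
  Submodule.map (Bsub K P n).mkQ (Zsub K P n)

/-- A path complex on V: a set of non-empty elementary paths (lists) closed under
removing the last (`dropLast`) or the first (`tail`) vertex. -/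
structure PathComplex (V : Type) where
  carrier : Set (List V)
  not_nil : ∀ p ∈ carrier, p ≠ []
  dropLast_mem : ∀ p ∈ carrier, 2 ≤ p.length → p.dropLast ∈ carrier
  tail_mem : ∀ p ∈ carrier, 2 ≤ p.length → p.tail ∈ carrier

end PH

namespace PH

/-- A weighted digraph: an edge relation without self-loops together with positive
edge weights. -/
structure WDigraph (V : Type) where
  edge : V → V → Prop
  loopless : ∀ v : V, ¬ edge v v
  w : V → V → ℝ
  w_pos : ∀ i j : V, edge i j → 0 < w i j

/-- The edge sublevel digraph G^δ: the edges of weight ≤ δ. -/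
def sublevel {V : Type} (G : WDigraph V) (δ : ℝ) : WDigraph V where
  edge i j := G.edge i j ∧ G.w i j ≤ δ
  loopless v h := G.loopless v h.1
  w := G.w
  w_pos i j h := G.w_pos i j h.1

/-- A digraph map: i → j implies f(i) = f(j) or f(i) → f(j). -/
def IsDGMap {V W : Type} (G : WDigraph V) (H : WDigraph W) (f : V → W) : Prop :=
  ∀ i j : V, G.edge i j → f i = f j ∨ H.edge (f i) (f j)

/-- The distortion dis(φ) of a digraph map between weighted digraphs
(the max over the empty set being 0). -/
noncomputable def dis {V W : Type} (G : WDigraph V) (H : WDigraph W) (φ : V → W) : ℝ :=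
  sSup (insert 0 {d : ℝ | ∃ x x' : V, G.edge x x' ∧ H.edge (φ x) (φ x') ∧
    d = |H.w (φ x) (φ x') - G.w x x'|})

/-- cod(φ, ψ): the maximum weight of an edge of the target of the form φ(x) → ψ(x) or
ψ(x) → φ(x) (0 if there is none). -/
noncomputable def cod {V W : Type} (H : WDigraph W) (φ ψ : V → W) : ℝ :=
  sSup (insert 0 ({d : ℝ | ∃ x : V, H.edge (φ x) (ψ x) ∧ d = H.w (φ x) (ψ x)} ∪
                  {d : ℝ | ∃ x : V, H.edge (ψ x) (φ x) ∧ d = H.w (ψ x) (φ x)}))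

/-- One-step homotopy of maps into a weighted digraph H: f(x) ⇒ g(x) for all x, or
g(x) ⇒ f(x) for all x. -/
def StepHomotopic {V W : Type} (H : WDigraph W) (f g : V → W) : Prop :=
  (∀ x : V, f x = g x ∨ H.edge (f x) (g x)) ∨
  (∀ x : V, g x = f x ∨ H.edge (g x) (f x))

/-- The elementary paths of the path complex generated by (the underlying digraph of)
a weighted digraph. -/
def pathsOfW {V : Type} (G : WDigraph V) : Set (List V) :=
  {l | l ≠ [] ∧ l.Chain' G.edge}

end PH


-- Auxiliary lemmas -------------------------------------------------------

namespace PH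

lemma find_id_fix (K : Type) [Field K] {V : Type} {s : Set (List V)}
    (hs : ∀ l ∈ s, Reg l) {z : List V →₀ K}
    (hz : z ∈ Finsupp.supported K K s) :
    find K (id : V → V) z = z := by
  rw [find, Finsupp.lsum_apply]
  conv_rhs => rw [← Finsupp.sum_single z]
  apply Finsupp.sum_congr
  intro p hp
  have hreg : Reg p := hs p (hz hp)
  simp [LinearMap.toSpanSingleton_apply, List.map_id, hreg, Finsupp.smul_single]

lemma Asub_mono (K : Type) [Field K] {V : Type} {P Q : Set (List V)}
    (h : P ⊆ Q) (n : ℕ) : Asub K P n ≤ Asub K Q n :=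
  Finsupp.supported_mono (fun l hl => ⟨h hl.1, hl.2⟩)

lemma OmegaSub_mono (K : Type) [Field K] {V : Type} {P Q : Set (List V)}
    (h : P ⊆ Q) (n : ℕ) : OmegaSub K P n ≤ OmegaSub K Q n :=
  inf_le_inf (Asub_mono K h n) (Submodule.comap_mono (Asub_mono K h (n-1)))

lemma Zsub_mono (K : Type) [Field K] {V : Type} {P Q : Set (List V)}
    (h : P ⊆ Q) (n : ℕ) : Zsub K P n ≤ Zsub K Q n :=
  inf_le_inf (OmegaSub_mono K h n) le_rfl

lemma Bsub_mono (K : Type) [Field K] {V : Type} {P Q : Set (List V)}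
    (h : P ⊆ Q) (n : ℕ) : Bsub K P n ≤ Bsub K Q n :=
  Submodule.map_mono (OmegaSub_mono K h (n+1))

lemma Zsub_supported (K : Type) [Field K] {V : Type} (P : Set (List V)) (n : ℕ)
    {z : List V →₀ K} (hz : z ∈ Zsub K P n) :
    z ∈ Finsupp.supported K K {l | l ∈ P ∧ l.length = n + 1 ∧ Reg l} :=
  hz.1.1

lemma find_id_Z (K : Type) [Field K] {V : Type} (P : Set (List V)) (n : ℕ)
    {z : List V →₀ K} (hz : z ∈ Zsub K P n) :
    find K (id : V → V) z = z :=
  find_id_fix K (fun _ hl => hl.2.2) (Zsub_supported K P n hz)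

lemma Bsub_supported (K : Type) [Field K] {V : Type} (P : Set (List V)) (n : ℕ)
    {z : List V →₀ K} (hz : z ∈ Bsub K P n) :
    z ∈ Finsupp.supported K K {l | l ∈ P ∧ l.length = n + 1 ∧ Reg l} := by
  obtain ⟨y, hy, rfl⟩ := hz
  exact hy.2

lemma find_id_B (K : Type) [Field K] {V : Type} (P : Set (List V)) (n : ℕ)
    {z : List V →₀ K} (hz : z ∈ Bsub K P n) :
    find K (id : V → V) z = z :=
  find_id_fix K (fun _ hl => hl.2.2) (Bsub_supported K P n hz)

lemma pathsOfW_mono {V : Type} {G H : WDigraph V} {δ δ' : ℝ}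
    (h : ∀ i j : V, G.edge i j → G.w i j ≤ δ → H.edge i j ∧ H.w i j ≤ δ') :
    pathsOfW (sublevel G δ) ⊆ pathsOfW (sublevel H δ') := by
  rintro l ⟨hne, hch⟩
  exact ⟨hne, hch.imp (fun {i j} hij => h i j hij.1 hij.2)⟩

end PH

theorem statement16 (K : Type) [Field K] (V : Type) [Fintype V]
    (G G' : PH.WDigraph V)
    -- same underlying digraph
    (hedge : ∀ i j : V, G.edge i j ↔ G'.edge i j)
    (η : ℝ)
    (hη : η = sSup (insert 0
      {d : ℝ | ∃ x x' : V, G.edge x x' ∧ d = |G.w x x' - G'.w x x'|})) :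
    ∀ p : ℕ,
      -- the identity-induced interleaving maps
      (∀ δ : ℝ, 0 ≤ δ →
        (∀ z : List V →₀ K, z ∈ PH.Zsub K (PH.pathsOfW (PH.sublevel G δ)) p →
            PH.find K (id : V → V) z ∈ PH.Zsub K (PH.pathsOfW (PH.sublevel G' (δ + η))) p) ∧
        (∀ z : List V →₀ K, z ∈ PH.Bsub K (PH.pathsOfW (PH.sublevel G δ)) p →
            PH.find K (id : V → V) z ∈ PH.Bsub K (PH.pathsOfW (PH.sublevel G' (δ + η))) p) ∧
        (∀ z : List V →₀ K, z ∈ PH.Zsub K (PH.pathsOfW (PH.sublevel G' δ)) p →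
            PH.find K (id : V → V) z ∈ PH.Zsub K (PH.pathsOfW (PH.sublevel G (δ + η))) p) ∧
        (∀ z : List V →₀ K, z ∈ PH.Bsub K (PH.pathsOfW (PH.sublevel G' δ)) p →
            PH.find K (id : V → V) z ∈ PH.Bsub K (PH.pathsOfW (PH.sublevel G (δ + η))) p)) ∧
      -- the structure maps are induced by the inclusions
      (∀ δ δ' : ℝ, 0 ≤ δ → δ ≤ δ' →
        PH.Zsub K (PH.pathsOfW (PH.sublevel G δ)) p ≤
          PH.Zsub K (PH.pathsOfW (PH.sublevel G δ')) p ∧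
        PH.Bsub K (PH.pathsOfW (PH.sublevel G δ)) p ≤
          PH.Bsub K (PH.pathsOfW (PH.sublevel G δ')) p ∧
        PH.Zsub K (PH.pathsOfW (PH.sublevel G' δ)) p ≤
          PH.Zsub K (PH.pathsOfW (PH.sublevel G' δ')) p ∧
        PH.Bsub K (PH.pathsOfW (PH.sublevel G' δ)) p ≤
          PH.Bsub K (PH.pathsOfW (PH.sublevel G' δ')) p) ∧
      -- the composites equal the structure maps δ ≤ δ+2η on homology
      (∀ δ : ℝ, 0 ≤ δ →
        (∀ z : List V →₀ K, z ∈ PH.Zsub K (PH.pathsOfW (PH.sublevel G δ)) p →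
            PH.find K (id : V → V) (PH.find K (id : V → V) z) - z ∈
              PH.Bsub K (PH.pathsOfW (PH.sublevel G (δ + 2 * η))) p) ∧
        (∀ z : List V →₀ K, z ∈ PH.Zsub K (PH.pathsOfW (PH.sublevel G' δ)) p →
            PH.find K (id : V → V) (PH.find K (id : V → V) z) - z ∈
              PH.Bsub K (PH.pathsOfW (PH.sublevel G' (δ + 2 * η))) p)) := by
  have hfin : BddAbove (insert (0:ℝ)
      {d : ℝ | ∃ x x' : V, G.edge x x' ∧ d = |G.w x x' - G'.w x x'|}) := by
    apply Set.Finite.bddAbove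
    apply Set.Finite.insert
    apply Set.Finite.subset (Set.finite_range
      (fun q : V × V => |G.w q.1 q.2 - G'.w q.1 q.2|))
    rintro d ⟨x, x', _, rfl⟩
    exact ⟨(x, x'), rfl⟩
  have hη0 : 0 ≤ η := hη ▸ le_csSup hfin (Set.mem_insert _ _)
  have hbound : ∀ x x' : V, G.edge x x' → |G.w x x' - G'.w x x'| ≤ η := by
    intro x x' hxx'
    exact hη ▸ le_csSup hfin (Set.mem_insert_of_mem _ ⟨x, x', hxx', rfl⟩)
  have hGG' : ∀ δ : ℝ, PH.pathsOfW (PH.sublevel G δ) ⊆ PH.pathsOfW (PH.sublevel G' (δ + η)) := by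
    intro δ
    apply PH.pathsOfW_mono
    intro i j hij hw
    refine ⟨(hedge i j).1 hij, ?_⟩
    have := abs_le.1 (hbound i j hij)
    linarith [this.1]
  have hG'G : ∀ δ : ℝ, PH.pathsOfW (PH.sublevel G' δ) ⊆ PH.pathsOfW (PH.sublevel G (δ + η)) := by
    intro δ
    apply PH.pathsOfW_mono
    intro i j hij hw
    have hij' : G.edge i j := (hedge i j).2 hij
    refine ⟨hij', ?_⟩
    have := abs_le.1 (hbound i j hij')
    linarith [this.2]
  have hGmono : ∀ δ δ' : ℝ, δ ≤ δ' →
      PH.pathsOfW (PH.sublevel G δ) ⊆ PH.pathsOfW (PH.sublevel G δ') := by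
    intro δ δ' hδ
    exact PH.pathsOfW_mono (fun i j hij hw => ⟨hij, hw.trans hδ⟩)
  have hG'mono : ∀ δ δ' : ℝ, δ ≤ δ' →
      PH.pathsOfW (PH.sublevel G' δ) ⊆ PH.pathsOfW (PH.sublevel G' δ') := by
    intro δ δ' hδ
    exact PH.pathsOfW_mono (fun i j hij hw => ⟨hij, hw.trans hδ⟩)
  intro p
  refine ⟨?_, ?_, ?_⟩
  · intro δ _
    refine ⟨?_, ?_, ?_, ?_⟩
    · intro z hz
      rw [PH.find_id_Z K _ p hz]
      exact PH.Zsub_mono K (hGG' δ) p hz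
    · intro z hz
      rw [PH.find_id_B K _ p hz]
      exact PH.Bsub_mono K (hGG' δ) p hz
    · intro z hz
      rw [PH.find_id_Z K _ p hz]
      exact PH.Zsub_mono K (hG'G δ) p hz
    · intro z hz
      rw [PH.find_id_B K _ p hz]
      exact PH.Bsub_mono K (hG'G δ) p hz
  · intro δ δ' _ hδδ'
    exact ⟨PH.Zsub_mono K (hGmono δ δ' hδδ') p, PH.Bsub_mono K (hGmono δ δ' hδδ') p,
      PH.Zsub_mono K (hG'mono δ δ' hδδ') p, PH.Bsub_mono K (hG'mono δ δ' hδδ') p⟩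
  · intro δ _
    constructor
    · intro z hz
      rw [PH.find_id_Z K _ p hz, PH.find_id_Z K _ p hz, sub_self]
      exact Submodule.zero_mem _
    · intro z hz
      rw [PH.find_id_Z K _ p hz, PH.find_id_Z K _ p hz, sub_self]
      exact Submodule.zero_mem _
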